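/- Let P₁, P₂ be superoperators on matrices over d₁- and d₂-dimensional spaces respectively, with associated linear maps A₁ = P₁ ∘ E₁₁ and A₂ = P₂ ∘ E₂₁, where Eᵢⱼ(ρ) = Mᵢⱼ ρ Mᵢⱼ†. If tr[E₁₀ ∘ A₁ⁿ (ρ₁)] = tr[E₂₀ ∘ A₂ⁿ (ρ₂)] holds for all 0 ≤ n ≤ d₁² + d₂² − 1, then it holds for all n ≥ 0. -/
import Mathlib


open Matrix

noncomputable section

private lemma key_zero {V : Type*} [AddCommGroup V] [Module ℂ V] [FiniteDimensional ℂ V]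
    (A : Module.End ℂ V) (φ : V →ₗ[ℂ] ℂ) (v : V)
    (h : ∀ n < Module.finrank ℂ V, φ ((A ^ n) v) = 0) : ∀ n, φ ((A ^ n) v) = 0 := by
  intro n
  induction n using Nat.strong_induction_on with
  | _ n ih =>
    set D := Module.finrank ℂ V with hD
    by_cases hn : n < D
    · exact h n hn
    · push_neg at hn
      obtain ⟨m, rfl⟩ := Nat.exists_eq_add_of_le hn
      have hCH := A.aeval_self_charpoly
      have hdeg : A.charpoly.natDegree = D := A.charpoly_natDegree
      rw [Polynomial.aeval_eq_sum_range, hdeg] at hCH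
      have h0 : ∑ i ∈ Finset.range (D + 1), A.charpoly.coeff i • (A ^ (i + m)) v = 0 := by
        have := congrArg (fun (f : Module.End ℂ V) => f ((A ^ m) v)) hCH
        simpa [pow_add, Module.End.mul_apply, LinearMap.sum_apply] using this
      have h1 : ∑ i ∈ Finset.range (D + 1), A.charpoly.coeff i * φ ((A ^ (i + m)) v) = 0 := by
        have := congrArg φ h0
        simpa [map_sum, _root_.map_smul, smul_eq_mul] using this
      rw [Finset.sum_range_succ] at h1
      have hc : A.charpoly.coeff D = 1 := by
        have := A.charpoly_monic.coeff_natDegree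
        rwa [hdeg] at this
      have hz : ∑ i ∈ Finset.range D, A.charpoly.coeff i * φ ((A ^ (i + m)) v) = 0 := by
        apply Finset.sum_eq_zero
        intro i hi
        rw [ih (i + m) (by simp at hi; omega), mul_zero]
      rw [hz, zero_add, hc, one_mul] at h1
      exact h1

private def conjMap {d : ℕ} (M : Matrix (Fin d) (Fin d) ℂ) :
    Matrix (Fin d) (Fin d) ℂ →ₗ[ℂ] Matrix (Fin d) (Fin d) ℂ where
  toFun ρ := M * ρ * Mᴴ
  map_add' x y := by simp only [Matrix.mul_add, Matrix.add_mul]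
  map_smul' c x := by simp [Matrix.mul_smul, Matrix.smul_mul]

/-- The measurement condition can be checked in finitely many steps: if the
termination probabilities of the two loops agree for all 0 ≤ n ≤ d₁² + d₂² − 1,
they agree for all n. -/
theorem measurement_condition_finite_check {d₁ d₂ : ℕ}
    (P₁ : Matrix (Fin d₁) (Fin d₁) ℂ →ₗ[ℂ] Matrix (Fin d₁) (Fin d₁) ℂ)
    (P₂ : Matrix (Fin d₂) (Fin d₂) ℂ →ₗ[ℂ] Matrix (Fin d₂) (Fin d₂) ℂ)
    (M₁₀ M₁₁ : Matrix (Fin d₁) (Fin d₁) ℂ) (M₂₀ M₂₁ : Matrix (Fin d₂) (Fin d₂) ℂ)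
    (ρ₁ : Matrix (Fin d₁) (Fin d₁) ℂ) (ρ₂ : Matrix (Fin d₂) (Fin d₂) ℂ)
    (h : ∀ n < d₁ ^ 2 + d₂ ^ 2,
      (M₁₀ * ((fun ρ => P₁ (M₁₁ * ρ * M₁₁ᴴ))^[n] ρ₁) * M₁₀ᴴ).trace =
      (M₂₀ * ((fun ρ => P₂ (M₂₁ * ρ * M₂₁ᴴ))^[n] ρ₂) * M₂₀ᴴ).trace) :
    ∀ n : ℕ,
      (M₁₀ * ((fun ρ => P₁ (M₁₁ * ρ * M₁₁ᴴ))^[n] ρ₁) * M₁₀ᴴ).trace =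
      (M₂₀ * ((fun ρ => P₂ (M₂₁ * ρ * M₂₁ᴴ))^[n] ρ₂) * M₂₀ᴴ).trace := by
  intro n
  set A₁ : Module.End ℂ (Matrix (Fin d₁) (Fin d₁) ℂ) := P₁ ∘ₗ conjMap M₁₁ with hA₁
  set A₂ : Module.End ℂ (Matrix (Fin d₂) (Fin d₂) ℂ) := P₂ ∘ₗ conjMap M₂₁ with hA₂
  set A : Module.End ℂ (Matrix (Fin d₁) (Fin d₁) ℂ × Matrix (Fin d₂) (Fin d₂) ℂ) :=
    A₁.prodMap A₂ with hA
  have hiter : ∀ m : ℕ, (A ^ m) (ρ₁, ρ₂) =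
      ((fun ρ => P₁ (M₁₁ * ρ * M₁₁ᴴ))^[m] ρ₁, (fun ρ => P₂ (M₂₁ * ρ * M₂₁ᴴ))^[m] ρ₂) := by
    intro m
    induction m with
    | zero => simp
    | succ m ih =>
      rw [pow_succ', Module.End.mul_apply, ih, Function.iterate_succ_apply',
        Function.iterate_succ_apply']
      rfl
  set φ : (Matrix (Fin d₁) (Fin d₁) ℂ × Matrix (Fin d₂) (Fin d₂) ℂ) →ₗ[ℂ] ℂ :=
    { toFun := fun p => (M₁₀ * p.1 * M₁₀ᴴ).trace - (M₂₀ * p.2 * M₂₀ᴴ).trace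
      map_add' := by
        intro x y
        simp [Matrix.mul_add, Matrix.add_mul, Matrix.trace_add]
        ring
      map_smul' := by
        intro c x
        simp [Matrix.mul_smul, Matrix.smul_mul, Matrix.trace_smul, smul_eq_mul]
        ring } with hφ
  have hrank : Module.finrank ℂ (Matrix (Fin d₁) (Fin d₁) ℂ × Matrix (Fin d₂) (Fin d₂) ℂ)
      = d₁ ^ 2 + d₂ ^ 2 := by
    rw [Module.finrank_prod, Module.finrank_matrix, Module.finrank_matrix]
    simp [sq]
  have hkey := key_zero A φ (ρ₁, ρ₂) ?_ n
  · rw [hiter] at hkey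
    exact sub_eq_zero.mp hkey
  · intro m hm
    rw [hrank] at hm
    rw [hiter]
    exact sub_eq_zero.mpr (h m hm)
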